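/- arXiv:1708.00029 — 4 statements merged into one kernel-verified Lean document; each statement's English description precedes it below -/
import Mathlib

section
/- Let {μ_l}_{l=1}^s and {ν_l}_{l=1}^t be two finite sequences of non-zero complex numbers. If the power sums agree, i.e. Σ_{l=1}^s μ_l^N = Σ_{l=1}^t ν_l^N for all integers N with 1 ≤ N ≤ max(s,t), then s = t and there exists a permutation π of {1,...,s} such that μ_l = ν_{π(l)} for all l. -/
/-!
Newton's identities express `k * e_k` through `e_0, …, e_{k-1}` and the power sums
`p_1, …, p_k`; in characteristic zero one may divide by `k`, so equal power sums up to
`max s t` force equal elementary symmetric functions `e_k` for `k ≤ max s t`. When no entry is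
zero, `e_k` is nonzero at `k` equal to the cardinality and vanishes beyond it, whence `s = t`.
Then `∏ (X - μ_l) = ∏ (X - ν_l)`, and comparing roots shows that `μ` and `ν` have the same
multiset of values.
-/

open Finset Polynomial

namespace Multiset

variable {R : Type*} [CommRing R]

theorem mul_esymm_eq_sum (A : Multiset R) (k : ℕ) :
    k * A.esymm k = (-1) ^ (k + 1) *
      ∑ a ∈ Finset.HasAntidiagonal.antidiagonal k with a.1 < k,
        (-1) ^ a.1 * A.esymm a.1 * (A.map (· ^ a.2)).sum := by
  classical
  have h := MvPolynomial.mul_esymm_eq_sum A R k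
  apply_fun MvPolynomial.aeval (R := R) (fun x : A ↦ (x : R)) at h
  simp only [map_mul, map_sum, map_pow, map_neg, map_one, map_natCast,
    MvPolynomial.aeval_esymm_eq_multiset_esymm, MvPolynomial.psum, MvPolynomial.aeval_X] at h
  have hpow (n : ℕ) : ∑ x : A, (x : R) ^ n = (A.map (· ^ n)).sum :=
    congrArg Multiset.sum (A.map_univ (· ^ n))
  simpa only [map_univ_coe, hpow] using h

theorem esymm_card (A : Multiset R) : A.esymm (card A) = A.prod := by
  simp [esymm, powersetCard_self]

theorem esymm_eq_zero_of_card_lt {A : Multiset R} {k : ℕ} (h : card A < k) : A.esymm k = 0 := by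
  simp [esymm, powersetCard_eq_empty _ h]

theorem esymm_eq_of_pow_sum_eq [NoZeroDivisors R] [CharZero R] {A B : Multiset R} {n : ℕ}
    (h : ∀ N, 1 ≤ N → N ≤ n → (A.map (· ^ N)).sum = (B.map (· ^ N)).sum) :
    ∀ k ≤ n, A.esymm k = B.esymm k := by
  intro k
  induction k using Nat.strong_induction_on with
  | _ k ih =>
  intro hk
  rcases k.eq_zero_or_pos with rfl | hk0
  · simp [esymm]
  refine mul_left_cancel₀ (Nat.cast_ne_zero.mpr hk0.ne' : (k : R) ≠ 0) ?_
  rw [mul_esymm_eq_sum, mul_esymm_eq_sum]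
  congr 1
  refine sum_congr rfl fun a ha ↦ ?_
  rw [Finset.mem_filter, Finset.HasAntidiagonal.mem_antidiagonal] at ha
  rw [ih a.1 ha.2 (by omega), h a.2 (by omega) (by omega)]

theorem card_eq_of_esymm_eq [NoZeroDivisors R] [Nontrivial R] {A B : Multiset R}
    (hA : (0 : R) ∉ A) (hB : (0 : R) ∉ B)
    (h : ∀ k ≤ max (card A) (card B), A.esymm k = B.esymm k) : card A = card B := by
  by_contra hne
  wlog hlt : card A < card B generalizing A B
  · exact this hB hA (fun k hk ↦ (h k (max_comm (card A) _ ▸ hk)).symm) (Ne.symm hne) (by omega)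
  have hesymm := h (card B) (le_max_right _ _)
  rw [esymm_eq_zero_of_card_lt hlt, esymm_card] at hesymm
  exact prod_ne_zero hB hesymm.symm

theorem eq_of_esymm_eq [IsDomain R] {A B : Multiset R} (hcard : card A = card B)
    (h : ∀ k ≤ card A, A.esymm k = B.esymm k) : A = B := by
  have hprod : (A.map fun a ↦ X - C a).prod = (B.map fun a ↦ X - C a).prod := by
    rw [prod_X_sub_X_eq_sum_esymm, prod_X_sub_X_eq_sum_esymm, ← hcard]
    exact sum_congr rfl fun j hj ↦ by rw [h j (by simp at hj; omega)]
  simpa only [roots_multiset_prod_X_sub_C] using congrArg roots hprod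

theorem eq_of_pow_sum_eq [IsDomain R] [CharZero R] {A B : Multiset R}
    (hA : (0 : R) ∉ A) (hB : (0 : R) ∉ B)
    (h : ∀ N, 1 ≤ N → N ≤ max (card A) (card B) → (A.map (· ^ N)).sum = (B.map (· ^ N)).sum) :
    A = B := by
  have hesymm := esymm_eq_of_pow_sum_eq h
  exact eq_of_esymm_eq (card_eq_of_esymm_eq hA hB hesymm)
    fun k hk ↦ hesymm k (le_max_of_le_left hk)

end Multiset

theorem exists_equiv_apply_eq_of_map_univ_eq {α β γ : Type*} [Fintype α] [Fintype β]
    [DecidableEq γ] {f : α → γ} {g : β → γ} (h : univ.val.map f = univ.val.map g) :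
    ∃ e : α ≃ β, ∀ a, f a = g (e a) := by
  have hfiber (c : γ) : Fintype.card {a // f a = c} = Fintype.card {b // g b = c} := by
    have hcount := congrArg (Multiset.count c) h
    simp only [Multiset.count_map] at hcount
    simp only [Fintype.card_subtype, Finset.card, Finset.filter_val]
    simpa only [eq_comm] using hcount
  exact ⟨.ofFiberEquiv fun c ↦ Fintype.equivOfCardEq (hfiber c),
    fun a ↦ (Equiv.ofFiberEquiv_map _ a).symm⟩

theorem power_sums_determine_sequences (s t : ℕ) (μ : Fin s → ℂ) (ν : Fin t → ℂ)
    (hμ : ∀ l, μ l ≠ 0) (hν : ∀ l, ν l ≠ 0)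
    (h : ∀ N : ℕ, 1 ≤ N → N ≤ max s t →
      ∑ l, (μ l) ^ N = ∑ l, (ν l) ^ N) :
    s = t ∧ ∃ π : Fin s ≃ Fin t, ∀ l, μ l = ν (π l) := by
  have hμν : univ.val.map μ = univ.val.map ν := by
    refine Multiset.eq_of_pow_sum_eq (by simpa [eq_comm] using hμ) (by simpa [eq_comm] using hν) ?_
    simpa only [Multiset.map_map, Function.comp_def, Finset.sum_map_val, Multiset.card_map,
      Finset.card_val, Finset.card_univ, Fintype.card_fin] using h
  exact ⟨by simpa using congrArg Multiset.card hμν, exists_equiv_apply_eq_of_map_univ_eq hμν⟩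
end

section
/- Let {μ_l}_{l=1}^s and {ν_l}_{l=1}^t be two finite sequences of non-zero complex numbers. If there exists N₀ ∈ ℕ such that Σ_{l=1}^s μ_l^N = Σ_{l=1}^t ν_l^N for all N ≥ N₀, then s = t and there exists a permutation π of {1,...,s} such that μ_l = ν_{π(l)} for all l. -/
/-!
Grouping terms by value, `∑ₗ μₗ ^ N = ∑ₐ mₐ aᴺ` with `mₐ` the multiplicity of `a` among the `μₗ`.
The characters `n ↦ aⁿ` of `ℕ` are linearly independent (Artin–Dedekind), so
`∑ₐ (mₐ - m'ₐ) a^{N₀} aⁿ = 0` for all `n` forces `mₐ = m'ₐ` for every non-zero `a`; equal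
multiplicities give a value-preserving bijection, built fibre by fibre.
-/

open Finset

theorem sum_pow_eq_sum_card_fiber_mul_pow {R ι : Type*} [CommSemiring R] [Fintype ι]
    [DecidableEq R] (f : ι → R) {A : Finset R} (hA : ∀ i, f i ∈ A) (N : ℕ) :
    ∑ i, f i ^ N = ∑ a ∈ A, (#{i | f i = a} : R) * a ^ N := by
  rw [← sum_fiberwise_of_maps_to (g := f) (fun i _ => hA i)]
  refine sum_congr rfl fun a _ => ?_
  rw [sum_congr rfl fun i hi => by rw [(mem_filter.mp hi).2], sum_const, nsmul_eq_mul]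

section PowerSums

variable {K : Type*} [CommRing K] [IsDomain K]

theorem eq_zero_of_forall_sum_mul_pow_eq_zero {A : Finset K} {c : K → K} {N₀ : ℕ}
    (h : ∀ N, N₀ ≤ N → ∑ a ∈ A, c a * a ^ N = 0) {a : K} (ha : a ∈ A) (ha₀ : a ≠ 0) :
    c a = 0 := by
  have hli : LinearIndependent K (fun a : K => ⇑(powersHom K a)) :=
    (linearIndependent_monoidHom (Multiplicative ℕ) K).comp _ (powersHom K).injective
  have hcomb : ∑ b ∈ A, (c b * b ^ N₀) • ⇑(powersHom K b) = 0 := by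
    funext n
    simpa [Finset.sum_apply, mul_assoc, ← pow_add] using h (N₀ + n.toAdd) (Nat.le_add_right _ _)
  have := linearIndependent_iff'.mp hli A _ hcomb a ha
  exact (mul_eq_zero.mp this).resolve_right (pow_ne_zero _ ha₀)

theorem card_fiber_eq_of_sum_pow_eventually_eq [CharZero K] [DecidableEq K]
    {ι κ : Type*} [Fintype ι] [Fintype κ] {f : ι → K} {g : κ → K}
    (hf : ∀ i, f i ≠ 0) (hg : ∀ j, g j ≠ 0) {N₀ : ℕ}
    (h : ∀ N, N₀ ≤ N → ∑ i, f i ^ N = ∑ j, g j ^ N) (a : K) :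
    #{i | f i = a} = #{j | g j = a} := by
  set A := univ.image f ∪ univ.image g
  by_cases ha : a ∈ A
  · have hdiff : ∀ N, N₀ ≤ N →
        ∑ b ∈ A, ((#{i | f i = b} : K) - #{j | g j = b}) * b ^ N = 0 := by
      intro N hN
      simp_rw [sub_mul, sum_sub_distrib]
      rw [← sum_pow_eq_sum_card_fiber_mul_pow f (by simp [A]),
        ← sum_pow_eq_sum_card_fiber_mul_pow g (by simp [A]), h N hN, sub_self]
    have ha₀ : a ≠ 0 := by
      simp only [A, mem_union, mem_image, mem_univ, true_and] at ha
      obtain ⟨i, rfl⟩ | ⟨j, rfl⟩ := ha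
      exacts [hf i, hg j]
    exact_mod_cast sub_eq_zero.mp (eq_zero_of_forall_sum_mul_pow_eq_zero hdiff ha ha₀)
  · simp only [A, mem_union, mem_image, mem_univ, true_and, not_or] at ha
    rw [filter_eq_empty_iff.mpr fun i _ hi => ha.1 ⟨i, hi⟩,
      filter_eq_empty_iff.mpr fun j _ hj => ha.2 ⟨j, hj⟩, card_empty, card_empty]

end PowerSums

theorem exists_equiv_of_card_fiber_eq {α ι κ : Type*} [Fintype ι] [Fintype κ] [DecidableEq α]
    {f : ι → α} {g : κ → α} (h : ∀ a, #{i | f i = a} = #{j | g j = a}) :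
    ∃ π : ι ≃ κ, ∀ i, f i = g (π i) := by
  let e : ∀ a, {i // f i = a} ≃ {j // g j = a} := fun a =>
    Fintype.equivOfCardEq (by simpa only [Fintype.card_subtype] using h a)
  exact ⟨Equiv.ofFiberEquiv e, fun i => (Equiv.ofFiberEquiv_map e i).symm⟩

theorem power_sums_eventually_determine_sequences (s t : ℕ) (μ : Fin s → ℂ) (ν : Fin t → ℂ)
    (hμ : ∀ l, μ l ≠ 0) (hν : ∀ l, ν l ≠ 0)
    (N₀ : ℕ)
    (h : ∀ N : ℕ, N₀ ≤ N → ∑ l, (μ l) ^ N = ∑ l, (ν l) ^ N) :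
    s = t ∧ ∃ π : Fin s ≃ Fin t, ∀ l, μ l = ν (π l) := by
  classical
  obtain ⟨π, hπ⟩ :=
    exists_equiv_of_card_fiber_eq (card_fiber_eq_of_sum_pow_eventually_eq hμ hν h)
  exact ⟨by simpa using Fintype.card_congr π, π, hπ⟩
end

section
/- Let m ≥ 1 and let P_0,...,P_{m−1} be projections in M_D(ℂ) (with indices taken mod m, P_m = P_0) satisfying P_u P_{u'} = δ_{u,u'} P_u and Σ_u P_u = 1. Let A^1,...,A^d ∈ M_D(ℂ) satisfy A^i = Σ_{u=0}^{m−1} P_u A^i P_{u+1} for all i. Then for any N ∈ ℕ and any indices i_1,...,i_N, if m does not divide N then tr(A^{i_1} ⋯ A^{i_N}) = 0. -/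
/-!
Grade `M_D(ℂ)` by the blocks of the complete orthogonal idempotents `P u`: a matrix `B` shifts
by `k` if `P v * B` only lives in the columns of `P (v + k)`. Shifts add under multiplication,
so the product `X` of `N` of the `A i` shifts by `N ≠ 0` in `Fin m`. Its diagonal blocks
`P v * X * P v` therefore vanish, and `tr X = ∑ v, tr (P v * X * P v) = 0`.
-/

open Matrix

/-- For matrices: the row block `v` of `B` is supported on the column block `v + k`. -/
def IsBlockShift {R G : Type*} [Mul R] [Add G] (P : G → R) (k : G) (B : R) : Prop :=
  ∀ v, P v * B = P v * B * P (v + k)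

namespace IsBlockShift

section

variable {R G : Type*} [Ring R] [AddMonoid G] {P : G → R}

theorem of_eq_sum [Fintype G] (hP : OrthogonalIdempotents P) {k : G} {B : R}
    (hB : B = ∑ u, P u * B * P (u + k)) : IsBlockShift P k B := by
  intro v
  calc P v * B = ∑ u, P v * P u * B * P (u + k) := by
        conv_lhs => rw [hB]
        simp only [Finset.mul_sum, mul_assoc]
    _ = P v * P v * B * P (v + k) := by
        refine Finset.sum_eq_single v (fun u _ hu => ?_) (by simp)
        rw [hP.ortho hu.symm, zero_mul, zero_mul]
    _ = P v * B * P (v + k) := by rw [(hP.idem v).eq]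

theorem one (hP : OrthogonalIdempotents P) : IsBlockShift P 0 (1 : R) := fun v => by
  rw [mul_one, add_zero, (hP.idem v).eq]

theorem mul {k l : G} {B C : R} (hB : IsBlockShift P k B) (hC : IsBlockShift P l C) :
    IsBlockShift P (k + l) (B * C) := fun v =>
  calc P v * (B * C) = P v * B * P (v + k) * C := by rw [← mul_assoc, ← hB v]
    _ = P v * B * P (v + k) * C * P (v + (k + l)) := by
        have hC' := hC (v + k)
        rw [← add_assoc]
        simp only [mul_assoc] at hC' ⊢
        rw [← hC']
    _ = P v * (B * C) * P (v + (k + l)) := by rw [← hB v, mul_assoc (P v) B C]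

theorem list_prod (hP : OrthogonalIdempotents P) {k : G} {l : List R}
    (hl : ∀ B ∈ l, IsBlockShift P k B) : IsBlockShift P (l.length • k) l.prod := by
  induction l with
  | nil => simpa using one hP
  | cons B t ih =>
    rw [List.length_cons, succ_nsmul', List.prod_cons]
    exact (hl B List.mem_cons_self).mul (ih fun C hC => hl C (List.mem_cons_of_mem B hC))

theorem mul_mul_self_eq_zero [IsLeftCancelAdd G] (hP : OrthogonalIdempotents P) {k : G} {B : R}
    (hB : IsBlockShift P k B) (hk : k ≠ 0) (v : G) : P v * B * P v = 0 := by
  have hv : v + k ≠ v := fun h => hk (add_eq_left.mp h)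
  rw [hB v, mul_assoc, hP.ortho hv, mul_zero]

end

theorem trace_eq_zero {n α G : Type*} [Fintype n] [DecidableEq n] [CommRing α]
    [AddMonoid G] [IsLeftCancelAdd G] [Fintype G] {P : G → Matrix n n α} (hP : CompleteOrthogonalIdempotents P) {k : G}
    {X : Matrix n n α} (hX : IsBlockShift P k X) (hk : k ≠ 0) : X.trace = 0 :=
  calc X.trace = ∑ v, (P v * P v * X).trace := by
        simp only [(hP.idem _).eq, ← trace_sum, ← Finset.sum_mul, hP.complete, one_mul]
    _ = ∑ v, (P v * X * P v).trace := by simp only [mul_assoc, trace_mul_comm (P _)]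
    _ = 0 := by simp [hX.mul_mul_self_eq_zero hP.toOrthogonalIdempotents hk]

end IsBlockShift

theorem periodic_tensor_trace_vanishes (m D d : ℕ) [NeZero m]
    (P : Fin m → Matrix (Fin D) (Fin D) ℂ)
    (hP : ∀ u u', P u * P u' = if u = u' then P u else 0)
    (hPsum : ∑ u, P u = 1)
    (A : Fin d → Matrix (Fin D) (Fin D) ℂ)
    (hA : ∀ i, A i = ∑ u, P u * A i * P (u + 1))
    (N : ℕ) (hN : ¬ m ∣ N) (idx : Fin N → Fin d) :
    Matrix.trace ((List.ofFn (fun k => A (idx k))).prod) = 0 := by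
  have hPc : CompleteOrthogonalIdempotents P :=
    ⟨⟨fun u => (by simpa using hP u u : P u * P u = P u),
      fun u u' h => by simpa [h] using hP u u'⟩, hPsum⟩
  have hshift : IsBlockShift P (N • 1) (List.ofFn fun k => A (idx k)).prod := by
    have h := IsBlockShift.list_prod hPc.toOrthogonalIdempotents (k := 1) fun B hB => by
      obtain ⟨k, rfl⟩ := List.mem_ofFn.mp hB
      exact IsBlockShift.of_eq_sum hPc.toOrthogonalIdempotents (hA (idx k))
    rwa [List.length_ofFn] at h
  have hN' : N • (1 : Fin m) ≠ 0 := by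
    open Fin.CommRing in
    rwa [nsmul_one, ne_eq, CharP.cast_eq_zero_iff (Fin m) m]
  exact hshift.trace_eq_zero hPc hN'
end

section
/- Let E: M_D(ℂ) → M_D(ℂ) be a completely positive trace-preserving map with Kraus operators {B^i}_{i=1}^d, and suppose E = F^p where F is a completely positive trace-preserving map with Kraus operators {A^i}_{i=1}^d. Then there exists an isometry W: ℂ^d → (ℂ^d)^{⊗p} such that A^{i_1} A^{i_2} ⋯ A^{i_p} = Σ_{i=1}^d W^{(i_1,...,i_p),i} B^i for all index tuples, and consequently |V_{pN}(A)⟩ = W^{⊗N} |V_N(B)⟩ for all N. -/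
/-!
Writing `C_v = A^{v_1} ⋯ A^{v_p}`, the iterate `F^p` has the Kraus operators `C_v`, so
`{C_v}` and `{B^i}` are two Kraus representations of the same channel `E`. Stacking the
vectorised Kraus operators as the columns of matrices `X` and `Y`, equality of the channels
says exactly `X Xᴴ = Y Yᴴ`. Hence `‖Xᴴ u‖ = ‖Yᴴ u‖` for every `u`, so `Yᴴ u ↦ Xᴴ u` is a
well-defined isometry on the range of `Yᴴ`; extending it to a unitary gives `X = Y U`. Padding
`Y` with zero columns (through the embedding `i ↦ (i, …, i)`) turns the unitary into an isometry
`W` with `C_v = ∑ᵢ W^{v,i} B^i`, and expanding the products of these linear combinations gives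
the identity for the matrix product states.
-/

open Matrix

theorem LinearMap.exists_linearIsometry_apply_eq_of_norm_eq {𝕜 E F : Type*} [RCLike 𝕜]
    [AddCommGroup E] [Module 𝕜 E] [NormedAddCommGroup F] [InnerProductSpace 𝕜 F]
    [FiniteDimensional 𝕜 F] (S T : E →ₗ[𝕜] F) (h : ∀ u, ‖S u‖ = ‖T u‖) :
    ∃ U : F →ₗᵢ[𝕜] F, ∀ u, U (S u) = T u := by
  have hker : LinearMap.ker S ≤ LinearMap.ker T := fun u hu => by
    rw [LinearMap.mem_ker, ← norm_eq_zero, ← h, norm_eq_zero]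
    exact hu
  let ℓ : LinearMap.range S →ₗ[𝕜] F :=
    (LinearMap.ker S).liftQ T hker ∘ₗ S.quotKerEquivRange.symm.toLinearMap
  have hℓ (u : E) : ℓ ⟨S u, LinearMap.mem_range_self S u⟩ = T u := by
    simp [ℓ, S.quotKerEquivRange_symm_apply_image u (LinearMap.mem_range_self S u)]
  let L : LinearMap.range S →ₗᵢ[𝕜] F :=
    ⟨ℓ, by rintro ⟨_, u, rfl⟩; exact (congrArg norm (hℓ u)).trans (h u).symm⟩
  exact ⟨L.extend, fun u => (L.extend_apply ⟨S u, _⟩).trans (hℓ u)⟩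

namespace Matrix

variable {𝕜 : Type*} [RCLike 𝕜]

theorem inner_toEuclideanLin_conjTranspose_self {m n : Type*} [Fintype m] [DecidableEq m]
    [Fintype n] (Z : Matrix m n 𝕜) (u : EuclideanSpace 𝕜 m) :
    inner 𝕜 (toEuclideanLin Zᴴ u) (toEuclideanLin Zᴴ u)
      = inner 𝕜 u (toEuclideanLin (Z * Zᴴ) u) := by
  classical
  rw [← LinearMap.adjoint_inner_right, ← toEuclideanLin_conjTranspose_eq_adjoint,
    conjTranspose_conjTranspose, toLpLin_mul_same]
  rfl

theorem exists_mem_unitaryGroup_eq_mul_of_mul_conjTranspose_eq {m n : Type*} [Fintype m]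
    [Fintype n] [DecidableEq n] {X Y : Matrix m n 𝕜} (h : X * Xᴴ = Y * Yᴴ) :
    ∃ U ∈ unitaryGroup n 𝕜, X = Y * U := by
  classical
  have hnorm (u : EuclideanSpace 𝕜 m) : ‖toEuclideanLin Yᴴ u‖ = ‖toEuclideanLin Xᴴ u‖ := by
    have hinner := inner_toEuclideanLin_conjTranspose_self Y u
    rw [← h, ← inner_toEuclideanLin_conjTranspose_self X u] at hinner
    rw [← sq_eq_sq₀ (norm_nonneg _) (norm_nonneg _), @norm_sq_eq_re_inner 𝕜,
      @norm_sq_eq_re_inner 𝕜, hinner]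
  obtain ⟨U, hU⟩ := LinearMap.exists_linearIsometry_apply_eq_of_norm_eq _ _ hnorm
  set M := toEuclideanLin.symm U.toLinearMap
  refine ⟨star M, ?_, ?_⟩
  · rw [mem_unitaryGroup_iff, star_star]
    apply toEuclideanLin.injective
    rw [star_eq_conjTranspose, toLpLin_mul_same, toEuclideanLin_conjTranspose_eq_adjoint,
      LinearEquiv.apply_symm_apply, LinearIsometry.adjoint_comp_self', toLpLin_one]
  · rw [← conjTranspose_conjTranspose X, ← conjTranspose_conjTranspose Y, star_eq_conjTranspose,
      ← conjTranspose_mul]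
    congr 1
    apply toEuclideanLin.injective
    rw [toLpLin_mul_same, LinearEquiv.apply_symm_apply]
    ext1 u
    exact (hU u).symm

theorem exists_mul_conjTranspose_eq_one_eq_mul_of_mul_conjTranspose_eq {m ι κ : Type*}
    [Fintype m] [Fintype ι] [DecidableEq ι] [Fintype κ] [DecidableEq κ] (e : ι ↪ κ)
    {X : Matrix m κ 𝕜} {Y : Matrix m ι 𝕜} (h : X * Xᴴ = Y * Yᴴ) :
    ∃ V : Matrix ι κ 𝕜, V * Vᴴ = 1 ∧ X = Y * V := by
  set P : Matrix ι κ 𝕜 := (1 : Matrix κ κ 𝕜).submatrix e id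
  have hP : P * Pᴴ = 1 := by
    ext i i'
    simp [P, mul_apply, one_apply, e.injective.eq_iff]
  obtain ⟨U, hU, rfl⟩ := exists_mem_unitaryGroup_eq_mul_of_mul_conjTranspose_eq (Y := Y * P)
    (by rw [h, conjTranspose_mul, Matrix.mul_assoc, ← Matrix.mul_assoc P, hP, Matrix.one_mul])
  refine ⟨P * U, ?_, Matrix.mul_assoc _ _ _⟩
  rw [conjTranspose_mul, Matrix.mul_assoc, ← Matrix.mul_assoc U, ← star_eq_conjTranspose,
    mem_unitaryGroup_iff.mp hU, Matrix.one_mul, hP]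

def vecStack {m n κ : Type*} (K : κ → Matrix m n 𝕜) : Matrix (m × n) κ 𝕜 :=
  of fun a j => K j a.1 a.2

theorem vecStack_mul_conjTranspose_eq_of_sum_conj_eq {m n ι κ : Type*} [Fintype n]
    [DecidableEq n] [Fintype ι] [Fintype κ] {K : κ → Matrix m n 𝕜} {L : ι → Matrix m n 𝕜}
    (h : ∀ X : Matrix n n 𝕜, ∑ j, K j * X * (K j)ᴴ = ∑ i, L i * X * (L i)ᴴ) :
    vecStack K * (vecStack K)ᴴ = vecStack L * (vecStack L)ᴴ := by
  ext ⟨a, k⟩ ⟨b, l⟩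
  simpa [vecStack, mul_apply, sum_apply, single_apply, ite_and, Finset.mul_sum, Finset.sum_mul]
    using congrFun₂ (h (single k l 1)) a b

theorem exists_mul_conjTranspose_eq_one_eq_sum_smul_of_sum_conj_eq {m n ι κ : Type*}
    [Fintype m] [Fintype n] [DecidableEq n] [Fintype ι] [DecidableEq ι] [Fintype κ] [DecidableEq κ] (e : ι ↪ κ)
    {K : κ → Matrix m n 𝕜} {L : ι → Matrix m n 𝕜}
    (h : ∀ X : Matrix n n 𝕜, ∑ j, K j * X * (K j)ᴴ = ∑ i, L i * X * (L i)ᴴ) :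
    ∃ V : Matrix ι κ 𝕜, V * Vᴴ = 1 ∧ ∀ j, K j = ∑ i, V i j • L i := by
  obtain ⟨V, hV, hKV⟩ := exists_mul_conjTranspose_eq_one_eq_mul_of_mul_conjTranspose_eq e
    (vecStack_mul_conjTranspose_eq_of_sum_conj_eq h)
  refine ⟨V, hV, fun j => ?_⟩
  ext a b
  simpa [vecStack, mul_apply, sum_apply, mul_comm] using congrFun₂ hKV (a, b) j

end Matrix

theorem iterate_apply_eq_sum_ofFn_prod_mul_mul_star {R ι : Type*} [Semiring R] [StarRing R]
    [Fintype ι] {a : ι → R} {F : R → R} (hF : ∀ x, F x = ∑ i, a i * x * star (a i)) (p : ℕ)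
    (x : R) :
    F^[p] x = ∑ v : Fin p → ι,
      (List.ofFn fun k => a (v k)).prod * x * star (List.ofFn fun k => a (v k)).prod := by
  induction p with
  | zero => simp
  | succ p ih =>
    rw [Function.iterate_succ_apply', ih, hF, ← (Fin.consEquiv fun _ => ι).sum_comp,
      Fintype.sum_prod_type]
    simp only [Fin.consEquiv_apply, List.ofFn_succ, Fin.cons_zero, Fin.cons_succ, List.prod_cons,
      Finset.mul_sum, Finset.sum_mul, star_mul, mul_assoc]

theorem List.prod_ofFn_sum_smul {R A ι : Type*} [CommSemiring R] [Semiring A] [Algebra R A]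
    [Fintype ι] {N : ℕ} (w : Fin N → ι → R) (b : ι → A) :
    (List.ofFn fun k => ∑ i, w k i • b i).prod
      = ∑ j : Fin N → ι, (∏ k, w k (j k)) • (List.ofFn fun k => b (j k)).prod := by
  classical
  simpa [MultilinearMap.map_smul_univ] using
    (MultilinearMap.mkPiAlgebraFin R N A).map_sum fun k i => w k i • b i

theorem divisible_implies_refinable_general (D d p : ℕ) (hp : 1 ≤ p)
    (A B : Fin d → Matrix (Fin D) (Fin D) ℂ)
    (E F : Matrix (Fin D) (Fin D) ℂ → Matrix (Fin D) (Fin D) ℂ)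
    (hE : ∀ X, E X = ∑ i, B i * X * (B i)ᴴ)
    (hF : ∀ X, F X = ∑ i, A i * X * (A i)ᴴ)
    (hdiv : ∀ X, F^[p] X = E X) :
    ∃ W : (Fin p → Fin d) → Fin d → ℂ,
      (∀ i i' : Fin d, ∑ jv : Fin p → Fin d, (starRingEnd ℂ) (W jv i) * W jv i'
          = if i = i' then 1 else 0) ∧
      (∀ iv : Fin p → Fin d,
        (List.ofFn (fun k => A (iv k))).prod = ∑ i, W iv i • B i) ∧
      (∀ (N : ℕ) (iv : Fin N → Fin p → Fin d),
        Matrix.trace ((List.ofFn (fun k => (List.ofFn (fun l => A (iv k l))).prod)).prod)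
          = ∑ j : Fin N → Fin d, (∏ k, W (iv k) (j k)) *
              Matrix.trace ((List.ofFn (fun k => B (j k))).prod)) := by
  have : Nonempty (Fin p) := ⟨⟨0, hp⟩⟩
  obtain ⟨V, hV, hAV⟩ := exists_mul_conjTranspose_eq_one_eq_sum_smul_of_sum_conj_eq
    ⟨Function.const (Fin p), Function.const_injective⟩
    fun X => (iterate_apply_eq_sum_ofFn_prod_mul_mul_star hF p X).symm.trans
      ((hdiv X).trans (hE X))
  refine ⟨fun iv i => V i iv, fun i i' => ?_, hAV, fun N iv => ?_⟩
  · simpa [mul_apply, one_apply, mul_comm, eq_comm] using congrFun₂ hV i' i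
  · simp_rw [hAV, List.prod_ofFn_sum_smul, trace_sum, trace_smul, smul_eq_mul]

theorem divisible_implies_refinable (D d p : ℕ) (hp : 1 ≤ p)
    (A B : Fin d → Matrix (Fin D) (Fin D) ℂ)
    (E F : Matrix (Fin D) (Fin D) ℂ → Matrix (Fin D) (Fin D) ℂ)
    (hE : ∀ X, E X = ∑ i, B i * X * (B i)ᴴ)
    (hF : ∀ X, F X = ∑ i, A i * X * (A i)ᴴ)
    (hTPE : ∀ X, Matrix.trace (E X) = Matrix.trace X)
    (hTPF : ∀ X, Matrix.trace (F X) = Matrix.trace X)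
    (hdiv : ∀ X, F^[p] X = E X) :
    ∃ W : (Fin p → Fin d) → Fin d → ℂ,
      (∀ i i' : Fin d, ∑ jv : Fin p → Fin d, (starRingEnd ℂ) (W jv i) * W jv i'
          = if i = i' then 1 else 0) ∧
      (∀ iv : Fin p → Fin d,
        (List.ofFn (fun k => A (iv k))).prod = ∑ i, W iv i • B i) ∧
      (∀ (N : ℕ) (iv : Fin N → Fin p → Fin d),
        Matrix.trace ((List.ofFn (fun k => (List.ofFn (fun l => A (iv k l))).prod)).prod)
          = ∑ j : Fin N → Fin d, (∏ k, W (iv k) (j k)) *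
              Matrix.trace ((List.ofFn (fun k => B (j k))).prod)) :=
  divisible_implies_refinable_general D d p hp A B E F hE hF hdiv
end
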